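/- Let R be an algebraic curvature tensor on a 3-dimensional real inner product space E and let {v₁, v₂, v₃} be an orthonormal basis of E diagonalizing the Ricci form of R. If u = c₁v₁ + c₂v₂ + c₃v₃ is a unit vector and x, y ∈ E are orthonormal vectors both orthogonal to u, then R(x,y,y,x) = c₁²·sec(v₂∧v₃) + c₂²·sec(v₃∧v₁) + c₃²·sec(v₁∧v₂), where sec(v_i∧v_j) = R(v_i, v_j, v_j, v_i). That is, the sectional curvature of the 2-plane orthogonal to u is the weighted combination of the three eigen-sectional-curvatures with weights c_i². -/

import Mathlib

open scoped RealInnerProductSpace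

/-- An algebraic curvature tensor on a real inner product space `E`: a multilinear map
`R : E × E × E × E → ℝ` with the symmetries of the Riemann curvature tensor. -/
structure AlgCurvTensor (E : Type*) [NormedAddCommGroup E] [InnerProductSpace ℝ E] where
  R : E →ₗ[ℝ] E →ₗ[ℝ] E →ₗ[ℝ] E →ₗ[ℝ] ℝ
  antisym_fst : ∀ x y z w : E, R x y z w = - R y x z w
  antisym_snd : ∀ x y z w : E, R x y z w = - R x y w z
  pair_symm : ∀ x y z w : E, R x y z w = R z w x y
  bianchi : ∀ x y z w : E, R x y z w + R y z x w + R z x y w = 0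

/-- The Ricci form `Ric(x,y) = Σᵢ R(eᵢ, x, y, eᵢ)`, computed in the orthonormal basis `b`
(the result is independent of the choice of orthonormal basis). -/
noncomputable def AlgCurvTensor.ricci {E : Type*} [NormedAddCommGroup E]
    [InnerProductSpace ℝ E] (T : AlgCurvTensor E) (b : OrthonormalBasis (Fin 3) ℝ E)
    (x y : E) : ℝ :=
  ∑ i : Fin 3, T.R (b i) x y (b i)

/-! In dimension three the bivector `x ∧ y` has, in the basis `b₁ ∧ b₂, b₂ ∧ b₀, b₀ ∧ b₁`,
the coordinates `w = a ⨯₃ d` of the cross product of the coordinate vectors `a, d` of `x, y`,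
and `R(x,y,y,x)` is a quadratic form in `w`. Its off-diagonal coefficients are, up to sign, the
off-diagonal entries of the Ricci form, so they vanish and `R(x,y,y,x) = Σ wₚ² sec(bₚ₊₁ ∧ bₚ₊₂)`.
Finally `wₖ² = 1 - aₖ² - dₖ² = cₖ²`, the second equality being Parseval's identity for the
orthonormal basis `(u, x, y)` applied to `bₖ`. -/

open scoped Matrix

theorem cross_apply_sq {R : Type*} [CommRing R] (a d : Fin 3 → R) (k : Fin 3) :
    (a ⨯₃ d) k ^ 2 = (a ⬝ᵥ a - a k ^ 2) * (d ⬝ᵥ d - d k ^ 2) - (a ⬝ᵥ d - a k * d k) ^ 2 := by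
  fin_cases k <;> simp [cross_apply, dotProduct, Fin.sum_univ_three] <;> ring

theorem LinearMap.IsAlt.apply_sum_smul_fin_three {R M : Type*} [CommRing R] [AddCommGroup M]
    [Module R M] {B : M →ₗ[R] M →ₗ[R] R} (hB : B.IsAlt) (e : Fin 3 → M) (a d : Fin 3 → R) :
    B (∑ i, a i • e i) (∑ i, d i • e i) = ∑ k, (a ⨯₃ d) k * B (e (k + 1)) (e (k + 2)) := by
  simp only [Fin.sum_univ_three, Fin.isValue, map_add, map_smul, add_apply, smul_apply,
    smul_eq_mul, hB.self_eq_zero, mul_zero, zero_add, add_zero, mul_neg, ← hB.neg (e 0) (e 1),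
    ← hB.neg (e 2) (e 0), ← hB.neg (e 1) (e 2), cross_apply, Fin.reduceAdd, Matrix.cons_val_zero,
    Matrix.cons_val_one, Matrix.cons_val]
  ring

theorem Orthonormal.sum_sq_inner_right_of_card_eq_finrank {ι E : Type*} [Fintype ι] [Nonempty ι]
    [NormedAddCommGroup E] [InnerProductSpace ℝ E] {v : ι → E} (hv : Orthonormal ℝ v)
    (card_eq : Fintype.card ι = Module.finrank ℝ E) (x : E) :
    ∑ i, ⟪v i, x⟫ ^ 2 = ‖x‖ ^ 2 := by
  have hv' : Orthonormal ℝ (basisOfOrthonormalOfCardEqFinrank hv card_eq) := by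
    rwa [coe_basisOfOrthonormalOfCardEqFinrank]
  simpa using
    ((basisOfOrthonormalOfCardEqFinrank hv card_eq).toOrthonormalBasis hv').sum_sq_inner_right x

theorem OrthonormalBasis.dotProduct_inner {ι E : Type*} [Fintype ι] [NormedAddCommGroup E]
    [InnerProductSpace ℝ E] (b : OrthonormalBasis ι ℝ E) (x y : E) :
    (fun i => ⟪b i, x⟫) ⬝ᵥ (fun i => ⟪b i, y⟫) = ⟪x, y⟫ := by
  simp only [dotProduct, ← b.sum_inner_mul_inner x y, real_inner_comm x]

namespace AlgCurvTensor

variable {E : Type*} [NormedAddCommGroup E] [InnerProductSpace ℝ E] (T : AlgCurvTensor E)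

theorem apply_self_left (v z w : E) : T.R v v z w = 0 := by
  linarith [T.antisym_fst v v z w]

theorem isAlt (x y : E) : (T.R x y).IsAlt := fun z => by
  linarith [T.antisym_snd x y z z]

theorem apply_sum_smul_fin_three (e : Fin 3 → E) (a d : Fin 3 → ℝ) :
    T.R (∑ i, a i • e i) (∑ i, d i • e i) (∑ i, d i • e i) (∑ i, a i • e i) =
      ∑ p, ∑ q, (a ⨯₃ d) p * (a ⨯₃ d) q *
        T.R (e (p + 1)) (e (p + 2)) (e (q + 2)) (e (q + 1)) := by
  set x := ∑ i, a i • e i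
  set y := ∑ i, d i • e i
  calc T.R x y y x = ∑ p, (d ⨯₃ a) p * T.R x y (e (p + 1)) (e (p + 2)) :=
        (T.isAlt x y).apply_sum_smul_fin_three e d a
    _ = ∑ p, (d ⨯₃ a) p * T.R (e (p + 1)) (e (p + 2)) x y := by
        simp_rw [T.pair_symm x y]
    _ = ∑ p, (d ⨯₃ a) p *
          ∑ q, (a ⨯₃ d) q * T.R (e (p + 1)) (e (p + 2)) (e (q + 1)) (e (q + 2)) := by
        simp only [x, y, (T.isAlt _ _).apply_sum_smul_fin_three]
    _ = _ := by
        rw [← cross_anticomm a d]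
        simp_rw [Finset.mul_sum]
        refine Fintype.sum_congr _ _ fun p => Fintype.sum_congr _ _ fun q => ?_
        rw [T.antisym_snd _ _ (e (q + 1)), Pi.neg_apply]
        ring

theorem apply_basis_pairs_eq_zero_of_ne (b : OrthonormalBasis (Fin 3) ℝ E)
    (hdiag : ∀ i j : Fin 3, i ≠ j → T.ricci b (b i) (b j) = 0) {p q : Fin 3} (hpq : p ≠ q) :
    T.R (b (p + 1)) (b (p + 2)) (b (q + 2)) (b (q + 1)) = 0 := by
  -- `Ric(b q, b p)` is the single term `R(b r, b q, b p, b r)`, `r` the third index, and the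
  -- goal is that term up to one antisymmetry.
  have h := hdiag q p hpq.symm
  fin_cases p <;> fin_cases q <;>
    simp [ricci, Fin.sum_univ_three, apply_self_left, (T.isAlt _ _).self_eq_zero] at hpq h ⊢ <;>
    first
    | (rw [T.antisym_fst]; simpa using h)
    | (rw [T.antisym_snd]; simpa using h)

theorem apply_eq_sum_sq_cross_of_ricci_diag (b : OrthonormalBasis (Fin 3) ℝ E)
    (hdiag : ∀ i j : Fin 3, i ≠ j → T.ricci b (b i) (b j) = 0) (x y : E) :
    T.R x y y x = ∑ p, ((fun i => ⟪b i, x⟫) ⨯₃ (fun i => ⟪b i, y⟫)) p ^ 2 *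
      T.R (b (p + 1)) (b (p + 2)) (b (p + 2)) (b (p + 1)) := by
  conv_lhs => rw [← b.sum_repr' x, ← b.sum_repr' y]
  rw [T.apply_sum_smul_fin_three]
  refine Fintype.sum_congr _ _ fun p => ?_
  rw [Fintype.sum_eq_single p fun q hqp => by
    rw [T.apply_basis_pairs_eq_zero_of_ne b hdiag hqp.symm, mul_zero]]
  ring

end AlgCurvTensor

theorem OrthonormalBasis.sq_cross_inner_eq_sq_inner {E : Type*} [NormedAddCommGroup E]
    [InnerProductSpace ℝ E] (b : OrthonormalBasis (Fin 3) ℝ E) {u x y : E}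
    (huxy : Orthonormal ℝ ![u, x, y]) (k : Fin 3) :
    ((fun i => ⟪b i, x⟫) ⨯₃ (fun i => ⟪b i, y⟫)) k ^ 2 = ⟪b k, u⟫ ^ 2 := by
  have hx : ‖x‖ = 1 := huxy.1 1
  have hy : ‖y‖ = 1 := huxy.1 2
  have hxy : ⟪x, y⟫ = 0 := huxy.2 (by decide : (1 : Fin 3) ≠ 2)
  have hparseval := huxy.sum_sq_inner_right_of_card_eq_finrank
    (by simp [Module.finrank_eq_card_basis b.toBasis]) (b k)
  simp only [Fin.sum_univ_three, Fin.isValue, Matrix.cons_val_zero, Matrix.cons_val_one,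
    Matrix.cons_val, real_inner_comm (b k), b.orthonormal.1 k, one_pow] at hparseval
  rw [cross_apply_sq, b.dotProduct_inner, b.dotProduct_inner, b.dotProduct_inner,
    real_inner_self_eq_norm_sq, real_inner_self_eq_norm_sq, hx, hy, hxy]
  linear_combination -hparseval

/-- Let `{v₁, v₂, v₃}` be an orthonormal basis diagonalizing the Ricci form of an algebraic
curvature tensor `R` on a `3`-dimensional inner product space. If `u = c₁v₁ + c₂v₂ + c₃v₃`
is a unit vector and `x, y` are orthonormal vectors orthogonal to `u`, then
`sec(x∧y) = R(x,y,y,x) = c₁²·sec(v₂∧v₃) + c₂²·sec(v₃∧v₁) + c₃²·sec(v₁∧v₂)`. -/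
theorem sec_of_plane_orthogonal_to_vector {E : Type*} [NormedAddCommGroup E]
    [InnerProductSpace ℝ E] (b : OrthonormalBasis (Fin 3) ℝ E) (T : AlgCurvTensor E)
    (hdiag : ∀ i j : Fin 3, i ≠ j → T.ricci b (b i) (b j) = 0)
    (c : Fin 3 → ℝ) (hu : ‖c 0 • b 0 + c 1 • b 1 + c 2 • b 2‖ = 1)
    (x y : E) (hx : ‖x‖ = 1) (hy : ‖y‖ = 1) (hxy : ⟪x, y⟫ = 0)
    (hxu : ⟪c 0 • b 0 + c 1 • b 1 + c 2 • b 2, x⟫ = 0)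
    (hyu : ⟪c 0 • b 0 + c 1 • b 1 + c 2 • b 2, y⟫ = 0) :
    T.R x y y x =
      (c 0) ^ 2 * T.R (b 1) (b 2) (b 2) (b 1)
      + (c 1) ^ 2 * T.R (b 2) (b 0) (b 0) (b 2)
      + (c 2) ^ 2 * T.R (b 0) (b 1) (b 1) (b 0) := by
  set u := c 0 • b 0 + c 1 • b 1 + c 2 • b 2
  have hcu : ∀ k, ⟪b k, u⟫ = c k := fun k => by
    simpa [Fin.sum_univ_three] using b.orthonormal.inner_right_fintype c k
  have huxy : Orthonormal ℝ ![u, x, y] := by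
    rw [orthonormal_iff_ite]
    intro i j
    fin_cases i <;> fin_cases j <;>
      simp [hu, hx, hy, hxy, hxu, hyu, real_inner_comm u, real_inner_comm x y]
  rw [T.apply_eq_sum_sq_cross_of_ricci_diag b hdiag]
  simp [Fin.sum_univ_three, b.sq_cross_inner_eq_sq_inner huxy, hcu]
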